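/- arXiv:2004.09723 — 2 statements merged into one kernel-verified Lean document; each statement's English description precedes it below -/
import Mathlib

section
/- (No momentum component.) Let A : Γ → ℝ³ be a C¹ function that is invariant under translations ({P_a, A^b} = 0 for all a,b), transforms as a vector under spatial rotations ({J_ab, A^c} = δ_ac A^b − δ_bc A^a for all a,b,c), and is invariant under time reversal (A(x,−p,−s) = A(x,p,s) for all (x,p,s)). Then A(x,p,s)·p = 0 for all (x,p,s) ∈ Γ. -/
noncomputable section

open Finset

abbrev R3 := Fin 3 → ℝ

/-- The spin phase space Γ = ℝ³ × ℝ³ × ℝ³ with points (x, p, s). -/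
abbrev Phase := R3 × R3 × R3

/-- Euclidean dot product on ℝ³. -/
def dot3 (v w : R3) : ℝ := ∑ a, v a * w a

/-- Euclidean norm on ℝ³. -/
def norm3 (v : R3) : ℝ := Real.sqrt (dot3 v v)

/-- Cross product on ℝ³. -/
def cross3 (v w : R3) : R3 :=
  ![v 1 * w 2 - v 2 * w 1, v 2 * w 0 - v 0 * w 2, v 0 * w 1 - v 1 * w 0]

/-- Kronecker delta. -/
def kdelta (a b : Fin 3) : ℝ := if a = b then 1 else 0

/-- Sign of an integer, valued in ℝ. -/
def isgn (x : ℤ) : ℝ := if 0 < x then 1 else if x < 0 then -1 else 0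

/-- Totally antisymmetric symbol on three indices with ε₀₁₂ = +1. -/
def eps3 (a b c : Fin 3) : ℝ :=
  isgn (((b : ℕ) : ℤ) - ((a : ℕ) : ℤ)) * isgn (((c : ℕ) : ℤ) - ((a : ℕ) : ℤ)) *
  isgn (((c : ℕ) : ℤ) - ((b : ℕ) : ℤ))

/-- Gradient of f with respect to x. -/
def dX (f : Phase → ℝ) (γ : Phase) : R3 := fun a => fderiv ℝ f γ (Pi.single a 1, 0, 0)

/-- Gradient of f with respect to p. -/
def dP (f : Phase → ℝ) (γ : Phase) : R3 := fun a => fderiv ℝ f γ (0, Pi.single a 1, 0)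

/-- Gradient of f with respect to s. -/
def dS (f : Phase → ℝ) (γ : Phase) : R3 := fun a => fderiv ℝ f γ (0, 0, Pi.single a 1)

/-- Poisson bracket {f,g} = ∇ₓf·∇ₚg − ∇ₚf·∇ₓg + s·(∇ₛf × ∇ₛg) on Γ. -/
def pb (f g : Phase → ℝ) (γ : Phase) : ℝ :=
  dot3 (dX f γ) (dP g γ) - dot3 (dP f γ) (dX g γ)
    + dot3 γ.2.2 (cross3 (dS f γ) (dS g γ))

/-- Generator of spatial translations: P_a(x,p,s) = p_a. -/
def Pgen (a : Fin 3) : Phase → ℝ := fun γ => γ.2.1 a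

/-- Generator of rotations: J_ab(x,p,s) = x_a p_b − x_b p_a + ε_{abc} s_c. -/
def Jgen (a b : Fin 3) : Phase → ℝ :=
  fun γ => γ.1 a * γ.2.1 b - γ.1 b * γ.2.1 a + ∑ c, eps3 a b c * γ.2.2 c

/-!
The scalar `f = A · p` Poisson-commutes with every `P_a` (translation invariance of `A`) and,
by the Leibniz rule, with every `J_ab` (the vector laws of `A` and of `p` cancel). Hence `f`
does not depend on `x` and is annihilated by the infinitesimal rotations `(0, n × p, n × s)`.
Rotating `p` and `s` by the angle `π` about a unit axis `n` orthogonal to both gives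
`f (x, -p, -s) = f (x, p, s)`, while time reversal gives `f (x, -p, -s) = -f (x, p, s)`.
-/

lemma dot3_cross3_eq (s u w : R3) : dot3 s (cross3 u w) = dot3 (cross3 s u) w := by
  simp only [dot3, cross3, Fin.sum_univ_three, Fin.isValue, Matrix.cons_val_zero,
    Matrix.cons_val_one, Matrix.cons_val]
  ring

lemma cross3_cross3_self (n v : R3) :
    cross3 n (cross3 n v) = dot3 n v • n - dot3 n n • v := by
  ext d
  fin_cases d <;> simp [cross3, dot3, Fin.sum_univ_three] <;> ring

lemma cross3_add_smul (n u v : R3) (a b : ℝ) :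
    cross3 n (a • u + b • v) = a • cross3 n u + b • cross3 n v := by
  ext d
  fin_cases d <;> simp [cross3] <;> ring

lemma fderiv_apply_eq_dot3 (g : Phase → ℝ) (γ v : Phase) :
    fderiv ℝ g γ v = dot3 v.1 (dX g γ) + dot3 v.2.1 (dP g γ) + dot3 v.2.2 (dS g γ) := by
  obtain ⟨u, w, t⟩ := v
  have hv : ((u, w, t) : Phase) = ∑ a, u a • ((Pi.single a 1, 0, 0) : Phase)
      + ∑ a, w a • ((0, Pi.single a 1, 0) : Phase)
      + ∑ a, t a • ((0, 0, Pi.single a 1) : Phase) := by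
    conv_lhs => rw [pi_eq_sum_univ' u, pi_eq_sum_univ' w, pi_eq_sum_univ' t]
    simp [Prod.ext_iff, Prod.fst_sum, Prod.snd_sum]
  conv_lhs => rw [hv]
  simp only [map_add, map_sum, map_smul, smul_eq_mul, dot3, dX, dP, dS]

-- The Hamiltonian vector field `X_h`, with the sign convention `{h, g} = dg(X_h)`.
def hamVec (h : Phase → ℝ) (γ : Phase) : Phase :=
  (-dP h γ, dX h γ, cross3 γ.2.2 (dS h γ))

lemma pb_eq_fderiv_hamVec (h g : Phase → ℝ) (γ : Phase) :
    pb h g γ = fderiv ℝ g γ (hamVec h γ) := by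
  rw [fderiv_apply_eq_dot3, pb, hamVec, dot3_cross3_eq]
  simp only [dot3, Pi.neg_apply, neg_mul, sum_neg_distrib]
  ring

def xCoord (i : Fin 3) : Phase →L[ℝ] ℝ :=
  (ContinuousLinearMap.proj i).comp (ContinuousLinearMap.fst ℝ R3 (R3 × R3))

def pCoord (i : Fin 3) : Phase →L[ℝ] ℝ :=
  (ContinuousLinearMap.proj i).comp
    ((ContinuousLinearMap.fst ℝ R3 R3).comp (ContinuousLinearMap.snd ℝ R3 (R3 × R3)))

def sCoord (i : Fin 3) : Phase →L[ℝ] ℝ :=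
  (ContinuousLinearMap.proj i).comp
    ((ContinuousLinearMap.snd ℝ R3 R3).comp (ContinuousLinearMap.snd ℝ R3 (R3 × R3)))

@[simp] lemma xCoord_apply (i : Fin 3) (v : Phase) : xCoord i v = v.1 i := rfl
@[simp] lemma pCoord_apply (i : Fin 3) (v : Phase) : pCoord i v = v.2.1 i := rfl
@[simp] lemma sCoord_apply (i : Fin 3) (v : Phase) : sCoord i v = v.2.2 i := rfl

lemma fderiv_Pgen_apply (a : Fin 3) (γ v : Phase) : fderiv ℝ (Pgen a) γ v = v.2.1 a :=
  congrArg (· v) (pCoord a).hasFDerivAt.fderiv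

lemma fderiv_Jgen_apply (a b : Fin 3) (γ v : Phase) :
    fderiv ℝ (Jgen a b) γ v = v.1 a * γ.2.1 b + γ.1 a * v.2.1 b
      - (v.1 b * γ.2.1 a + γ.1 b * v.2.1 a) + ∑ c, eps3 a b c * v.2.2 c := by
  have hJ : HasFDerivAt (Jgen a b) _ γ :=
    (((xCoord a).hasFDerivAt.mul (pCoord b).hasFDerivAt).sub
      ((xCoord b).hasFDerivAt.mul (pCoord a).hasFDerivAt)).add
      (HasFDerivAt.fun_sum (u := univ) fun c _ => (sCoord c).hasFDerivAt.const_mul (eps3 a b c))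
  rw [hJ.fderiv]
  simp only [xCoord_apply, pCoord_apply, sCoord_apply, add_apply, sub_apply, smul_apply,
    _root_.sum_apply, smul_eq_mul]
  ring

lemma hamVec_Pgen (a : Fin 3) (γ : Phase) : hamVec (Pgen a) γ = (-Pi.single a 1, 0, 0) := by
  ext d <;> fin_cases d <;>
    simp [hamVec, dX, dP, dS, cross3, fderiv_Pgen_apply, Pi.single_apply, eq_comm]

lemma dX_Jgen (a b : Fin 3) (γ : Phase) :
    dX (Jgen a b) γ = γ.2.1 b • Pi.single a 1 - γ.2.1 a • Pi.single b 1 := by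
  ext d
  simp [dX, fderiv_Jgen_apply, Pi.single_apply, eq_comm]

lemma hamVec_Jgen (a b : Fin 3) (γ : Phase) : hamVec (Jgen a b) γ =
    (γ.1 b • Pi.single a 1 - γ.1 a • Pi.single b 1, dX (Jgen a b) γ,
      cross3 γ.2.2 (fun c => eps3 a b c)) := by
  ext d <;> simp [hamVec, dP, dS, cross3, fderiv_Jgen_apply, Pi.single_apply, eq_comm]

def rotField (n : R3) (γ : Phase) : Phase := (0, cross3 n γ.2.1, cross3 n γ.2.2)

-- With `J_c := J_{c+1,c+2}`, `-∑ n_c X_{J_c}` is the full infinitesimal rotation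
-- `(n × x, n × p, n × s)`; the translations `X_{P_a}` cancel its `x`-part.
lemma rotField_eq_hamVec (n : R3) (γ : Phase) :
    rotField n γ =
      ∑ a, cross3 n γ.1 a • hamVec (Pgen a) γ
        - (n 0 • hamVec (Jgen 1 2) γ + n 1 • hamVec (Jgen 2 0) γ
          + n 2 • hamVec (Jgen 0 1) γ) := by
  simp only [rotField, hamVec_Pgen, hamVec_Jgen, dX_Jgen]
  ext d <;> fin_cases d <;>
    simp [cross3, eps3, isgn, Prod.fst_sum, Prod.snd_sum, Pi.single_apply] <;> ring

lemma fderiv_rotField_eq_zero (g : Phase → ℝ) (γ : Phase) (hP : ∀ a, pb (Pgen a) g γ = 0)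
    (hJ : ∀ a b, pb (Jgen a b) g γ = 0) (n : R3) :
    fderiv ℝ g γ (rotField n γ) = 0 := by
  simp [rotField_eq_hamVec, ← pb_eq_fderiv_hamVec, hP, hJ]

lemma fderiv_dot3_momentum_apply {A : Phase → R3} {γ : Phase} (hA : DifferentiableAt ℝ A γ)
    (v : Phase) : fderiv ℝ (fun γ => dot3 (A γ) γ.2.1) γ v
      = ∑ c, (fderiv ℝ (fun γ => A γ c) γ v * γ.2.1 c + A γ c * v.2.1 c) := by
  have hf : HasFDerivAt (fun γ => dot3 (A γ) γ.2.1) _ γ :=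
    HasFDerivAt.fun_sum (u := univ) fun c _ =>
      (differentiableAt_pi.1 hA c).hasFDerivAt.mul (pCoord c).hasFDerivAt
  rw [hf.fderiv]
  simp [add_comm, mul_comm]

lemma pb_dot3_momentum {A : Phase → R3} {γ : Phase} (hA : DifferentiableAt ℝ A γ)
    (h : Phase → ℝ) : pb h (fun γ => dot3 (A γ) γ.2.1) γ
      = ∑ c, (pb h (fun γ => A γ c) γ * γ.2.1 c + A γ c * dX h γ c) := by
  simp only [pb_eq_fderiv_hamVec, fderiv_dot3_momentum_apply hA]
  rfl

lemma pb_Pgen_dot3_momentum {A : Phase → R3} {γ : Phase} (hA : DifferentiableAt ℝ A γ)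
    (a : Fin 3) (hinv : ∀ c, pb (Pgen a) (fun γ => A γ c) γ = 0) :
    pb (Pgen a) (fun γ => dot3 (A γ) γ.2.1) γ = 0 := by
  have hdX : dX (Pgen a) γ = 0 := congrArg (fun v : Phase => v.2.1) (hamVec_Pgen a γ)
  simp [pb_dot3_momentum hA, hinv, hdX]

lemma pb_Jgen_dot3_momentum {A : Phase → R3} {γ : Phase} (hA : DifferentiableAt ℝ A γ)
    (a b : Fin 3) (hvec : ∀ c, pb (Jgen a b) (fun γ => A γ c) γ
      = kdelta a c * A γ b - kdelta b c * A γ a) :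
    pb (Jgen a b) (fun γ => dot3 (A γ) γ.2.1) γ = 0 := by
  simp [pb_dot3_momentum hA, hvec, dX_Jgen, kdelta, sub_mul, mul_sub, sum_add_distrib,
    Pi.single_apply]

-- Rotation by the angle `θ` about the unit axis `n`; correct only on vectors orthogonal to `n`.
def axisRot (n : R3) (θ : ℝ) (v : R3) : R3 := Real.cos θ • v + Real.sin θ • cross3 n v

lemma hasDerivAt_axisRot {n v : R3} (hn : dot3 n n = 1) (hnv : dot3 n v = 0) (θ : ℝ) :
    HasDerivAt (fun θ => axisRot n θ v) (cross3 n (axisRot n θ v)) θ := by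
  refine (((Real.hasDerivAt_cos θ).smul_const v).add
    ((Real.hasDerivAt_sin θ).smul_const (cross3 n v))).congr_deriv ?_
  rw [axisRot, cross3_add_smul, cross3_cross3_self, hn, hnv]
  ext d
  simp only [neg_smul, Pi.add_apply, Pi.neg_apply, Pi.smul_apply, smul_eq_mul, zero_smul,
    one_smul, zero_sub, smul_neg]
  ring

lemma exists_unit_orthogonal (p s : R3) :
    ∃ n : R3, dot3 n n = 1 ∧ dot3 n p = 0 ∧ dot3 n s = 0 := by
  obtain ⟨m, hm, hm0⟩ := Submodule.exists_mem_ne_zero_of_ne_bot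
    (LinearMap.ker_ne_bot_of_finrank_lt (f := (Matrix.of ![p, s]).mulVecLin) (by simp))
  have hmp : dot3 m p = 0 := by
    simpa [dot3, Matrix.mulVec, dotProduct, mul_comm] using congrFun hm 0
  have hms : dot3 m s = 0 := by
    simpa [dot3, Matrix.mulVec, dotProduct, mul_comm] using congrFun hm 1
  have hpos : 0 < dot3 m m := lt_of_le_of_ne (sum_nonneg fun i _ => mul_self_nonneg (m i))
    (Ne.symm (mt dotProduct_self_eq_zero.1 hm0))
  have hsmul (c : ℝ) (v w : R3) : dot3 (c • v) w = c * dot3 v w := by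
    simp [dot3, mul_sum, mul_assoc]
  refine ⟨(√(dot3 m m))⁻¹ • m, ?_, by rw [hsmul, hmp, mul_zero],
    by rw [hsmul, hms, mul_zero]⟩
  simp only [dot3, Pi.smul_apply, smul_eq_mul, mul_mul_mul_comm _ (m _), ← mul_sum] at hpos ⊢
  rw [← mul_inv, Real.mul_self_sqrt hpos.le, inv_mul_cancel₀ hpos.ne']

lemma apply_neg_eq_of_fderiv_rotField_eq_zero (g : Phase → ℝ) (hg : Differentiable ℝ g)
    (hrot : ∀ n γ, fderiv ℝ g γ (rotField n γ) = 0) (x p s : R3) :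
    g (x, -p, -s) = g (x, p, s) := by
  obtain ⟨n, hn, hnp, hns⟩ := exists_unit_orthogonal p s
  let F (θ : ℝ) : ℝ := g (x, axisRot n θ p, axisRot n θ s)
  have hF (θ : ℝ) : HasDerivAt F 0 θ := by
    have hcurve : HasDerivAt (fun θ => ((x, axisRot n θ p, axisRot n θ s) : Phase))
        (rotField n (x, axisRot n θ p, axisRot n θ s)) θ :=
      (hasDerivAt_const θ x).prodMk
        ((hasDerivAt_axisRot hn hnp θ).prodMk (hasDerivAt_axisRot hn hns θ))
    exact ((hg _).hasFDerivAt.comp_hasDerivAt θ hcurve).congr_deriv (hrot n _)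
  have hconst := is_const_of_deriv_eq_zero (fun θ => (hF θ).differentiableAt)
    (fun θ => (hF θ).deriv) Real.pi 0
  simpa [F, axisRot] using hconst

theorem statement11 (A : Phase → R3) (hA : ContDiff ℝ 1 A)
    (h1 : ∀ a b : Fin 3, ∀ γ, pb (Pgen a) (fun γ => A γ b) γ = 0)
    (h2 : ∀ a b c : Fin 3, ∀ γ, pb (Jgen a b) (fun γ => A γ c) γ
      = kdelta a c * A γ b - kdelta b c * A γ a)
    (h3 : ∀ x p s : R3, A (x, -p, -s) = A (x, p, s)) :
    ∀ γ : Phase, dot3 (A γ) γ.2.1 = 0 := by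
  rintro ⟨x, p, s⟩
  have hAd : Differentiable ℝ A := hA.differentiable one_ne_zero
  have hf : Differentiable ℝ fun γ : Phase => dot3 (A γ) γ.2.1 := by
    unfold dot3
    fun_prop
  have hrot (n : R3) (γ : Phase) := fderiv_rotField_eq_zero _ γ
    (fun a => pb_Pgen_dot3_momentum (hAd γ) a (fun c => h1 a c γ))
    (fun a b => pb_Jgen_dot3_momentum (hAd γ) a b (fun c => h2 a b c γ)) n
  have hneg := apply_neg_eq_of_fderiv_rotField_eq_zero _ hf hrot x p s
  simp only [h3, dot3, Pi.neg_apply, mul_neg, sum_neg_distrib] at hneg ⊢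
  linarith
end
end

section
/- (The standard boost between the momentum rest frame and a given frame.) Let P be future-directed timelike with κ := √(−η(P,P)) and let u be a future-directed unit timelike vector. Then 1 − η(u,P)/κ > 0, and the matrix B with entries B^μ_ν := δ^μ_ν + (P^μ/κ + u^μ)(P_ν/κ + u_ν)/(1 − η(u,P)/κ) − (2/κ)u^μP_ν satisfies: (i) η(Bv, Bw) = η(v,w) for all v,w ∈ V (B is a Lorentz transformation); (ii) B(P/κ) = u; (iii) Bv = v for every v with η(v,u) = 0 and η(v,P) = 0 (B fixes the spacelike plane orthogonal to u and P). -/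
noncomputable section

open Finset

abbrev V4 := Fin 4 → ℝ

/-- Sign of the Minkowski metric diag(-1,1,1,1) on the diagonal. -/
def sgn4 (μ : Fin 4) : ℝ := if μ = 0 then -1 else 1

/-- Index lowering with η = diag(-1,1,1,1): `lo v μ = v_μ`. -/
def lo (v : V4) : V4 := fun μ => sgn4 μ * v μ

/-- Minkowski bilinear form of signature (-,+,+,+). -/
def mink (v w : V4) : ℝ := ∑ μ, lo v μ * w μ

/-- Future-directed timelike vector. -/
def FDTimelike (v : V4) : Prop := mink v v < 0 ∧ 0 < v 0

/-- Future-directed unit timelike vector. -/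
def FDUnit (u : V4) : Prop := mink u u = -1 ∧ 0 < u 0

/-- κ = √(−η(P,P)). -/
def kappa (P : V4) : ℝ := Real.sqrt (-(mink P P))

/-- Spin tensor at the point x: S[x]_{μν} = J_{μν} − x_μ P_ν + x_ν P_μ. -/
def spinT (J : Fin 4 → Fin 4 → ℝ) (P x : V4) (μ ν : Fin 4) : ℝ :=
  J μ ν - lo x μ * lo P ν + lo x ν * lo P μ

/-- SSC worldline with respect to f: points where S[x]_{μν} f^ν = 0. -/
def SSCline (J : Fin 4 → Fin 4 → ℝ) (P f : V4) : Set V4 :=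
  {x | ∀ μ, ∑ ν, spinT J P x μ ν * f ν = 0}

/-- The standard boost B(u) with respect to P:
B^μ_ν = δ^μ_ν + (P^μ/κ + u^μ)(P_ν/κ + u_ν)/(1 − η(u,P)/κ) − (2/κ) u^μ P_ν. -/
def boost (P u : V4) (μ ν : Fin 4) : ℝ :=
  (if μ = ν then 1 else 0)
  + (P μ / kappa P + u μ) * (lo P ν / kappa P + lo u ν) / (1 - mink u P / kappa P)
  - (2 / kappa P) * u μ * lo P ν

/-- A matrix acting on a vector: (Bv)^μ = B^μ_ν v^ν. -/
def matApp (B : Fin 4 → Fin 4 → ℝ) (v : V4) : V4 := fun μ => ∑ ν, B μ ν * v ν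

/-!
Write `p = P/κ`; both `p` and `u` are future-directed unit timelike vectors. For any symmetric
bilinear form `β` and any `p`, `u` with `β(p,p) = β(u,u) = -1` and `β(u,p) ≠ 1`, the map
`v ↦ v + β(p+u, v)/(1 - β(u,p)) (p+u) - 2 β(p,v) u` is an isometry of `β` taking `p` to `u` and
fixing `{p, u}^⊥`; this is a direct expansion. The boost of the statement is this map for the
Minkowski form, and the denominator is positive by the reverse Cauchy–Schwarz inequality
`η(u,P) < 0` for future-directed timelike vectors.
-/

namespace LinearMap.BilinForm

variable {K M : Type*} [Field K] [AddCommGroup M] [Module K M] (B : LinearMap.BilinForm K M)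

def unitBoost (p u v : M) : M :=
  v + (B (p + u) v / (1 - B u p)) • (p + u) - (2 * B p v) • u

variable {B}

theorem unitBoost_apply_left {p u : M} (hp : B p p = -1) (hup : 1 - B u p ≠ 0) :
    B.unitBoost p u p = u := by
  have hcoef : B (p + u) p / (1 - B u p) = -1 := by
    rw [add_left, hp, div_eq_iff hup]; ring
  rw [unitBoost, hcoef, hp]
  module

theorem unitBoost_of_orthogonal {p u v : M} (hpv : B p v = 0) (huv : B u v = 0) :
    B.unitBoost p u v = v := by
  simp [unitBoost, hpv, huv]

theorem unitBoost_isometry (hB : B.IsSymm) {p u : M} (hp : B p p = -1) (hu : B u u = -1)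
    (hup : 1 - B u p ≠ 0) (v w : M) :
    B (B.unitBoost p u v) (B.unitBoost p u w) = B v w := by
  simp only [unitBoost, add_left, add_right, sub_left, sub_right, smul_left, smul_right]
  rw [hB.eq v p, hB.eq v u, hB.eq p u, hp, hu]
  field_simp
  ring

end LinearMap.BilinForm

theorem mink_eq (v w : V4) : mink v w = -(v 0 * w 0) + (v 1 * w 1 + v 2 * w 2 + v 3 * w 3) := by
  simp only [mink, lo, sgn4, Fin.sum_univ_four, Fin.isValue, Fin.reduceEq, ↓reduceIte]
  ring

def minkForm : LinearMap.BilinForm ℝ V4 :=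
  LinearMap.mk₂ ℝ mink (fun _ _ _ => by simp only [mink_eq, Pi.add_apply]; ring)
    (fun _ _ _ => by simp only [mink_eq, Pi.smul_apply, smul_eq_mul]; ring)
    (fun _ _ _ => by simp only [mink_eq, Pi.add_apply]; ring)
    (fun _ _ _ => by simp only [mink_eq, Pi.smul_apply, smul_eq_mul]; ring)

@[simp]
theorem minkForm_apply (v w : V4) : minkForm v w = mink v w := rfl

theorem mink_comm (v w : V4) : mink v w = mink w v := by
  simp only [mink_eq]; ring

theorem minkForm_isSymm : minkForm.IsSymm := ⟨mink_comm⟩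

theorem FDUnit.fdTimelike {u : V4} (hu : FDUnit u) : FDTimelike u :=
  ⟨hu.1.trans_lt (by norm_num), hu.2⟩

theorem mink_neg_of_fdTimelike {v w : V4} (hv : FDTimelike v) (hw : FDTimelike w) :
    mink v w < 0 := by
  obtain ⟨hvv, hv0⟩ := hv
  obtain ⟨hww, hw0⟩ := hw
  rw [mink_eq] at hvv hww ⊢
  set d := v 1 * w 1 + v 2 * w 2 + v 3 * w 3
  -- Lagrange's identity gives the spatial Cauchy–Schwarz inequality
  have hcs : d ^ 2 ≤ (v 1 ^ 2 + v 2 ^ 2 + v 3 ^ 2) * (w 1 ^ 2 + w 2 ^ 2 + w 3 ^ 2) := by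
    nlinarith [sq_nonneg (v 1 * w 2 - v 2 * w 1), sq_nonneg (v 1 * w 3 - v 3 * w 1),
      sq_nonneg (v 2 * w 3 - v 3 * w 2)]
  have hsq : d ^ 2 < (v 0 * w 0) ^ 2 := by
    nlinarith [sq_nonneg (v 1), sq_nonneg (v 2), sq_nonneg (v 3), sq_nonneg (w 1),
      sq_nonneg (w 2), sq_nonneg (w 3)]
  have := (le_abs_self d).trans_lt (abs_lt_of_sq_lt_sq hsq (mul_pos hv0 hw0).le)
  linarith

theorem kappa_pos {P : V4} (hP : mink P P < 0) : 0 < kappa P :=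
  Real.sqrt_pos.mpr (neg_pos.mpr hP)

theorem mink_kappa_inv_smul_self {P : V4} (hP : mink P P < 0) :
    mink ((kappa P)⁻¹ • P) ((kappa P)⁻¹ • P) = -1 := by
  have hκ : kappa P ^ 2 = -mink P P := Real.sq_sqrt (neg_nonneg.mpr hP.le)
  rw [← minkForm_apply, LinearMap.BilinForm.smul_left, LinearMap.BilinForm.smul_right,
    minkForm_apply]
  field_simp [(kappa_pos hP).ne']
  linarith

theorem matApp_boost (P u v : V4) :
    matApp (boost P u) v = minkForm.unitBoost ((kappa P)⁻¹ • P) u v := by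
  funext μ
  fin_cases μ <;>
    simp only [matApp, boost, LinearMap.BilinForm.unitBoost, minkForm_apply, mink, lo, sgn4,
      Fin.sum_univ_four, map_add, map_smul, LinearMap.add_apply, LinearMap.smul_apply,
      Pi.add_apply, Pi.sub_apply, Pi.smul_apply, smul_eq_mul, Fin.isValue, Fin.reduceEq,
      Fin.reduceFinMk, Fin.zero_eta, Fin.mk_one, ↓reduceIte] <;>
    ring

theorem statement17 (P u : V4) (hP : FDTimelike P) (hu : FDUnit u) :
    0 < 1 - mink u P / kappa P ∧
    (∀ v w : V4, mink (matApp (boost P u) v) (matApp (boost P u) w) = mink v w) ∧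
    matApp (boost P u) ((kappa P)⁻¹ • P) = u ∧
    (∀ v : V4, mink v u = 0 → mink v P = 0 → matApp (boost P u) v = v) := by
  have hκ : 0 < kappa P := kappa_pos hP.1
  have hden : 0 < 1 - mink u P / kappa P := by
    have := div_neg_of_neg_of_pos (mink_neg_of_fdTimelike hu.fdTimelike hP) hκ
    linarith
  have hden' : 1 - minkForm u ((kappa P)⁻¹ • P) ≠ 0 := by
    rw [LinearMap.BilinForm.smul_right, minkForm_apply, ← div_eq_inv_mul]
    exact hden.ne'
  have hp : minkForm ((kappa P)⁻¹ • P) ((kappa P)⁻¹ • P) = -1 := mink_kappa_inv_smul_self hP.1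
  simp only [matApp_boost]
  refine ⟨hden, LinearMap.BilinForm.unitBoost_isometry minkForm_isSymm hp hu.1 hden',
    LinearMap.BilinForm.unitBoost_apply_left hp hden', fun v hvu hvP => ?_⟩
  refine LinearMap.BilinForm.unitBoost_of_orthogonal ?_ (by rwa [minkForm_apply, mink_comm])
  rw [LinearMap.BilinForm.smul_left, minkForm_apply, mink_comm, hvP, mul_zero]
end
end
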